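/- arXiv:1910.13514 — 2 statements merged into one kernel-verified Lean document; each statement's English description precedes it below -/
import Mathlib

section
/- Let J be a measurable range function, W ⊆ L²(Ω, H) the closed subspace corresponding to J, R a measurable range operator on J, and U : W → W a bounded linear operator satisfying (Uφ)(ω) = R(ω)(φ(ω)) for a.e. ω ∈ Ω, for every φ ∈ W. Let (φ_n)_{n∈ℕ} be a sequence in W such that for a.e. ω ∈ Ω, the family (φ_n(ω))_{n∈ℕ} is a Parseval frame for J(ω). Then Σ_{n∈ℕ} ‖U φ_n‖²_{L²(Ω,H)} = ∫_Ω Σ_{n∈ℕ} ‖R(ω)(φ_n(ω))‖²_H dm(ω) (in [0, ∞]); consequently, if Σ_{n∈ℕ} ‖U φ_n‖² < ∞ then for a.e. ω ∈ Ω one has Σ_{n∈ℕ} ‖R(ω)(φ_n(ω))‖² < ∞, i.e., R(ω) is a Hilbert–Schmidt operator on J(ω). (Proposition 3.3(1), stated in the multiplication-preserving formulation on L²(Ω, H).) -/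
open MeasureTheory
open scoped ENNReal NNReal

/-- The orthogonal projection of `H` onto a closed subspace `K`, as a map `H →L[ℂ] H`
(junk `0` if `K` is not closed). -/
noncomputable def projCLM {H : Type*} [NormedAddCommGroup H] [InnerProductSpace ℂ H]
    [CompleteSpace H] (K : Submodule ℂ H) : H →L[ℂ] H :=
  haveI := Classical.dec (IsClosed (K : Set H))
  if h : IsClosed (K : Set H) then
    haveI : CompleteSpace K := h.completeSpace_coe
    K.subtypeL.comp (K.orthogonalProjection)
  else 0

/-- The subspace `W = {φ ∈ L²(Ω, H) : φ(ω) ∈ J(ω) for a.e. ω}` corresponding to a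
range function `J`. -/
noncomputable def rangeSubmodule {Ω H : Type*} [MeasurableSpace Ω] (μ : Measure Ω)
    [NormedAddCommGroup H] [InnerProductSpace ℂ H]
    (J : Ω → Submodule ℂ H) : Submodule ℂ (Lp H 2 μ) where
  carrier := {φ | ∀ᵐ ω ∂μ, (φ : Ω → H) ω ∈ J ω}
  add_mem' := by
    intro φ ψ hφ hψ
    simp only [Set.mem_setOf_eq] at *
    filter_upwards [Lp.coeFn_add φ ψ, hφ, hψ] with ω h1 h2 h3
    rw [h1]; exact (J ω).add_mem h2 h3
  zero_mem' := by
    simp only [Set.mem_setOf_eq]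
    filter_upwards [Lp.coeFn_zero H 2 μ] with ω h
    rw [h]; exact (J ω).zero_mem
  smul_mem' := by
    intro c φ hφ
    simp only [Set.mem_setOf_eq] at *
    filter_upwards [Lp.coeFn_smul c φ, hφ] with ω h1 h2
    rw [h1]; exact (J ω).smul_mem c h2

lemma norm_sq_eq_lintegral' {Ω H : Type*} [MeasurableSpace Ω] {μ : Measure Ω}
    [NormedAddCommGroup H] (f : Lp H 2 μ) :
    (‖f‖₊ : ℝ≥0∞) ^ 2 = ∫⁻ ω, (‖f ω‖₊ : ℝ≥0∞) ^ 2 ∂μ := by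
  have h1 : (‖f‖₊ : ℝ≥0∞) = eLpNorm f 2 μ := by
    rw [Lp.nnnorm_def, ENNReal.coe_toNNReal (Lp.eLpNorm_ne_top f)]
  have h2 := eLpNorm_nnreal_pow_eq_lintegral (μ := μ) (f := (f : Ω → H)) (p := 2) (by norm_num)
  rw [h1]
  have : eLpNorm (f : Ω → H) ((2:ℝ≥0) : ℝ≥0∞) μ = eLpNorm (f : Ω → H) 2 μ := by norm_num
  rw [← this, ← ENNReal.rpow_natCast _ 2]
  rw [show ((2:ℕ):ℝ) = ((2:ℝ≥0):ℝ) by norm_num, h2]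
  refine lintegral_congr fun ω => ?_
  rw [show ((2:ℝ≥0):ℝ) = ((2:ℕ):ℝ) by norm_num, ENNReal.rpow_natCast, enorm_eq_nnnorm]

/-- **Proposition 3.3(1) (multiplication-preserving formulation).** Let `J` be a measurable
range function with corresponding closed subspace `W ⊆ L²(Ω, H)`, `R` a measurable range
operator on `J`, and `U : W → W` a bounded linear operator with `(Uφ)(ω) = R(ω)(φ(ω))`
a.e. for every `φ ∈ W`. If `(φ_n)` is a sequence in `W` such that `(φ_n(ω))_n` is a
Parseval frame for `J(ω)` for a.e. `ω`, then
`Σ_n ‖U φ_n‖² = ∫_Ω Σ_n ‖R(ω)(φ_n(ω))‖² dm(ω)` in `[0, ∞]`; consequently, if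
`Σ_n ‖U φ_n‖² < ∞` then for a.e. `ω` one has `Σ_n ‖R(ω)(φ_n(ω))‖² < ∞`, i.e. `R(ω)` is
Hilbert–Schmidt on `J(ω)`. -/
theorem translation_preserving_stmt10
    {Ω H : Type*} [MeasurableSpace Ω] (μ : Measure Ω) [SigmaFinite μ]
    [NormedAddCommGroup H] [InnerProductSpace ℂ H] [CompleteSpace H]
    [TopologicalSpace.SeparableSpace H]
    [TopologicalSpace.SeparableSpace (Lp ℂ 2 μ)]
    -- `J` is a measurable range function:
    (J : Ω → Submodule ℂ H)
    (hJclosed : ∀ ω, IsClosed ((J ω : Set H)))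
    (hJmeas : ∀ a b : H, Measurable fun ω => (inner ℂ (projCLM (J ω) a) b : ℂ))
    -- `R` is a measurable range operator on `J`:
    (R : Ω → H →L[ℂ] H)
    (hR : ∀ᵐ ω ∂μ, ∀ a : H, R ω a = R ω (projCLM (J ω) a))
    (hRmeas : ∀ a b : H, Measurable fun ω => (inner ℂ (R ω (projCLM (J ω) a)) b : ℂ))
    -- `U : W → W` is a bounded linear operator with `(Uφ)(ω) = R(ω)(φ(ω))` a.e.:
    (U : rangeSubmodule μ J →L[ℂ] rangeSubmodule μ J)
    (hUR : ∀ φ : rangeSubmodule μ J,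
      ∀ᵐ ω ∂μ, ((U φ : Lp H 2 μ)) ω = R ω ((φ : Lp H 2 μ) ω))
    -- `(φ_n)` is a sequence in `W` whose fibers form Parseval frames for `J(ω)` a.e.:
    (φ : ℕ → rangeSubmodule μ J)
    (hφ : ∀ᵐ ω ∂μ, ∀ a ∈ J ω,
      HasSum (fun n => ‖(inner ℂ a ((φ n : Lp H 2 μ) ω) : ℂ)‖ ^ 2) (‖a‖ ^ 2)) :
    -- `Σ_n ‖U φ_n‖² = ∫ Σ_n ‖R(ω)(φ_n(ω))‖² dm(ω)` in `[0, ∞]`: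
    ∑' n, (‖U (φ n)‖₊ : ℝ≥0∞) ^ 2
        = ∫⁻ ω, ∑' n, (‖R ω ((φ n : Lp H 2 μ) ω)‖₊ : ℝ≥0∞) ^ 2 ∂μ ∧
    -- consequently `R(ω)` is Hilbert–Schmidt a.e. whenever the sum is finite:
    (∑' n, (‖U (φ n)‖₊ : ℝ≥0∞) ^ 2 < ⊤ →
      ∀ᵐ ω ∂μ, ∑' n, (‖R ω ((φ n : Lp H 2 μ) ω)‖₊ : ℝ≥0∞) ^ 2 < ⊤) := by
  -- measurability of each fiberwise integrand
  have hmeas : ∀ n : ℕ, AEMeasurable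
      (fun ω => (‖R ω ((φ n : Lp H 2 μ) ω)‖₊ : ℝ≥0∞) ^ 2) μ := by
    intro n
    have h1 : AEMeasurable (fun ω => (‖((U (φ n) : Lp H 2 μ)) ω‖₊ : ℝ≥0∞) ^ 2) μ :=
      ((Lp.aestronglyMeasurable ((U (φ n) : Lp H 2 μ))).enorm).pow_const 2
    refine h1.congr ?_
    filter_upwards [hUR (φ n)] with ω h
    rw [h]
  -- the key fiberwise identity for each n
  have key : ∀ n : ℕ, (‖U (φ n)‖₊ : ℝ≥0∞) ^ 2
      = ∫⁻ ω, (‖R ω ((φ n : Lp H 2 μ) ω)‖₊ : ℝ≥0∞) ^ 2 ∂μ := by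
    intro n
    have hc : (‖U (φ n)‖₊ : ℝ≥0∞) = (‖(U (φ n) : Lp H 2 μ)‖₊ : ℝ≥0∞) := rfl
    rw [hc, norm_sq_eq_lintegral']
    refine lintegral_congr_ae ?_
    filter_upwards [hUR (φ n)] with ω h
    rw [h]
  have main : ∑' n, (‖U (φ n)‖₊ : ℝ≥0∞) ^ 2
      = ∫⁻ ω, ∑' n, (‖R ω ((φ n : Lp H 2 μ) ω)‖₊ : ℝ≥0∞) ^ 2 ∂μ := by
    simp_rw [key]
    exact (lintegral_tsum hmeas).symm
  refine ⟨main, fun hfin => ?_⟩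
  rw [main] at hfin
  exact ae_lt_top' (AEMeasurable.ennreal_tsum hmeas) hfin.ne
end

section
/- Let J be a measurable range function, W ⊆ L²(Ω, H) the closed subspace corresponding to J, R a measurable range operator on J with R(ω)(J(ω)) ⊆ J(ω) for a.e. ω, and U : W → W a bounded linear operator satisfying (Uφ)(ω) = R(ω)(φ(ω)) for a.e. ω ∈ Ω, for every φ ∈ W. Then U is self-adjoint (⟨Uφ, ψ⟩ = ⟨φ, Uψ⟩ for all φ, ψ ∈ W) if and only if for a.e. ω ∈ Ω, R(ω) is self-adjoint on J(ω), i.e., ⟨R(ω)a, b⟩ = ⟨a, R(ω)b⟩ for all a, b ∈ J(ω). (Proposition 3.4(2), stated in the multiplication-preserving formulation on L²(Ω, H).) -/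
open MeasureTheory
open scoped ENNReal NNReal

section Aux

variable {H : Type*} [NormedAddCommGroup H] [InnerProductSpace ℂ H] [CompleteSpace H]

lemma projCLM_apply_mem (K : Submodule ℂ H) (hK : IsClosed (K : Set H)) (a : H) :
    projCLM K a ∈ K := by
  haveI : CompleteSpace K := hK.completeSpace_coe
  rw [projCLM, dif_pos hK]
  exact (K.orthogonalProjection a).2

lemma projCLM_of_mem {K : Submodule ℂ H} (hK : IsClosed (K : Set H)) {a : H} (ha : a ∈ K) :
    projCLM K a = a := by
  haveI : CompleteSpace K := hK.completeSpace_coe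
  rw [projCLM, dif_pos hK]
  exact K.starProjection_eq_self_iff.2 ha

lemma projCLM_norm_le (K : Submodule ℂ H) (a : H) : ‖projCLM K a‖ ≤ ‖a‖ := by
  by_cases hK : IsClosed (K : Set H)
  · haveI : CompleteSpace K := hK.completeSpace_coe
    rw [projCLM, dif_pos hK]
    calc ‖(K.orthogonalProjection a : H)‖ = ‖K.orthogonalProjection a‖ := rfl
      _ ≤ ‖K.orthogonalProjection‖ * ‖a‖ := (K.orthogonalProjection).le_opNorm a
      _ ≤ 1 * ‖a‖ := mul_le_mul_of_nonneg_right (K.orthogonalProjectionOnto_norm_le) (norm_nonneg a)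
      _ = ‖a‖ := one_mul _
  · rw [projCLM, dif_neg hK]
    simp [norm_nonneg a]

/-- In a separable Hilbert space, weakly measurable functions are strongly measurable. -/
lemma stronglyMeasurable_of_forall_inner {Ω : Type*} [MeasurableSpace Ω]
    [TopologicalSpace.SeparableSpace H]
    (f : Ω → H) (hf : ∀ b : H, Measurable fun ω => (inner ℂ (f ω) b : ℂ)) :
    StronglyMeasurable f := by
  letI : MeasurableSpace H := borel H
  haveI : BorelSpace H := ⟨rfl⟩
  rw [stronglyMeasurable_iff_measurable_separable]
  refine ⟨?_, (TopologicalSpace.isSeparable_univ_iff.2 ‹_›).mono (Set.subset_univ _)⟩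
  obtain ⟨w, b, hb⟩ := exists_hilbertBasis ℂ H
  -- w is countable
  have hw : w.Countable := by
    have hdisj : w.PairwiseDisjoint (fun x => Metric.ball x (1/2)) := by
      intro x hx y hy hxy
      refine Metric.ball_disjoint_ball ?_
      have horth := b.orthonormal
      rw [hb] at horth
      have h1 : ‖x‖ = 1 := horth.1 ⟨x, hx⟩
      have h2 : ‖y‖ = 1 := horth.1 ⟨y, hy⟩
      have h3 : (inner ℂ x y : ℂ) = 0 := by
        exact horth.2 (i := ⟨x, hx⟩) (j := ⟨y, hy⟩) (by simpa using hxy)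
      have hsq : ‖x - y‖ ^ 2 = 2 := by
        have := @norm_sub_sq ℂ H _ _ _ x y
        rw [h1, h2, h3] at this
        norm_num at this
        linarith
      have : (1 : ℝ) ≤ ‖x - y‖ := by nlinarith [norm_nonneg (x - y)]
      rw [dist_eq_norm]
      linarith
    exact hdisj.countable_of_isOpen (fun i _ => Metric.isOpen_ball)
      (fun i _ => ⟨i, by simp⟩)
  haveI : Countable w := hw.to_subtype
  have hcoef : ∀ i : w, Measurable fun ω => b.repr (f ω) i := by
    intro i
    have : ∀ ω, b.repr (f ω) i = starRingEnd ℂ (inner ℂ (f ω) (b i)) := by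
      intro ω
      rw [b.repr_apply_apply, ← inner_conj_symm]
    simp_rw [this]
    exact Complex.continuous_conj.measurable.comp (hf (b i))
  have hpart : ∀ F : Finset w, Measurable fun ω => ∑ i ∈ F, b.repr (f ω) i • b i := by
    intro F
    exact Finset.measurable_sum _ fun i _ => (hcoef i).smul_const _
  refine measurable_of_tendsto_metrizable' Filter.atTop hpart ?_
  rw [tendsto_pi_nhds]
  intro ω
  exact (b.hasSum_repr (f ω))

end Aux

/-- **Proposition 3.4(2) (multiplication-preserving formulation).** Let `J` be a measurable
range function with corresponding closed subspace `W ⊆ L²(Ω, H)`, `R` a measurable range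
operator on `J` with `R(ω)(J(ω)) ⊆ J(ω)` a.e., and `U : W → W` a bounded linear operator
with `(Uφ)(ω) = R(ω)(φ(ω))` a.e. for every `φ ∈ W`. Then `U` is self-adjoint if and only
if `R(ω)` is self-adjoint on `J(ω)` for a.e. `ω`. -/
theorem translation_preserving_stmt13
    {Ω H : Type*} [MeasurableSpace Ω] (μ : Measure Ω) [SigmaFinite μ]
    [NormedAddCommGroup H] [InnerProductSpace ℂ H] [CompleteSpace H]
    [TopologicalSpace.SeparableSpace H]
    [TopologicalSpace.SeparableSpace (Lp ℂ 2 μ)]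
    -- `J` is a measurable range function:
    (J : Ω → Submodule ℂ H)
    (hJclosed : ∀ ω, IsClosed ((J ω : Set H)))
    (hJmeas : ∀ a b : H, Measurable fun ω => (inner ℂ (projCLM (J ω) a) b : ℂ))
    -- `R` is a measurable range operator on `J`, mapping `J(ω)` into itself a.e.:
    (R : Ω → H →L[ℂ] H)
    (hR : ∀ᵐ ω ∂μ, ∀ a : H, R ω a = R ω (projCLM (J ω) a))
    (hRmeas : ∀ a b : H, Measurable fun ω => (inner ℂ (R ω (projCLM (J ω) a)) b : ℂ))
    (hRJ : ∀ᵐ ω ∂μ, ∀ a ∈ J ω, R ω a ∈ J ω)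
    -- `U : W → W` is a bounded linear operator with `(Uφ)(ω) = R(ω)(φ(ω))` a.e.:
    (U : rangeSubmodule μ J →L[ℂ] rangeSubmodule μ J)
    (hUR : ∀ φ : rangeSubmodule μ J,
      ∀ᵐ ω ∂μ, ((U φ : Lp H 2 μ)) ω = R ω ((φ : Lp H 2 μ) ω)) :
    -- `U` is self-adjoint iff `R(ω)` is self-adjoint on `J(ω)` for a.e. `ω`:
    (∀ φ ψ : rangeSubmodule μ J,
        (inner ℂ ((U φ : Lp H 2 μ)) (ψ : Lp H 2 μ) : ℂ)
          = inner ℂ (φ : Lp H 2 μ) ((U ψ : Lp H 2 μ)))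
      ↔ (∀ᵐ ω ∂μ, ∀ a ∈ J ω, ∀ b ∈ J ω,
          (inner ℂ (R ω a) b : ℂ) = inner ℂ a (R ω b)) := by
  constructor
  · intro hsa
    haveI : Nonempty H := ⟨0⟩
    set u := TopologicalSpace.denseSeq H with hu
    have hud : DenseRange u := TopologicalSpace.denseRange_denseSeq H
    set g : ℕ → Ω → H := fun n ω => projCLM (J ω) (u n) with hg
    set h : ℕ → Ω → H := fun n ω => R ω (projCLM (J ω) (u n)) with hh
    have hgm : ∀ n, StronglyMeasurable (g n) := fun n =>
      stronglyMeasurable_of_forall_inner _ (fun b => hJmeas (u n) b)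
    have hgmem : ∀ n ω, g n ω ∈ J ω := fun n ω => projCLM_apply_mem _ (hJclosed ω) _
    have hmem : ∀ (n : ℕ) (s : Set Ω), MeasurableSet s → μ s < ⊤ →
        MemLp (s.indicator (g n)) 2 μ := by
      intro n s hs hμs
      refine MemLp.of_le (memLp_indicator_const 2 hs (u n) (Or.inr hμs.ne))
        (((hgm n).indicator hs).aestronglyMeasurable) ?_
      refine Filter.Eventually.of_forall fun ω => ?_
      by_cases hω : ω ∈ s
      · simp only [Set.indicator_of_mem hω]
        exact projCLM_norm_le _ _
      · simp [Set.indicator_of_notMem hω]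
    have key : ∀ (n m : ℕ) (s : Set Ω), MeasurableSet s → μ s < ⊤ →
        IntegrableOn
          (fun ω => (inner ℂ (h n ω) (g m ω) : ℂ) - inner ℂ (g n ω) (h m ω)) s μ ∧
        ∫ ω in s, ((inner ℂ (h n ω) (g m ω) : ℂ) - inner ℂ (g n ω) (h m ω)) ∂μ = 0 := by
      intro n m s hs hμs
      set φf := (hmem n s hs hμs).toLp _ with hφf
      set ψf := (hmem m s hs hμs).toLp _ with hψf
      have hφc : (φf : Ω → H) =ᵐ[μ] s.indicator (g n) := (hmem n s hs hμs).coeFn_toLp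
      have hψc : (ψf : Ω → H) =ᵐ[μ] s.indicator (g m) := (hmem m s hs hμs).coeFn_toLp
      have hφmem : φf ∈ rangeSubmodule μ J := by
        show ∀ᵐ ω ∂μ, (φf : Ω → H) ω ∈ J ω
        filter_upwards [hφc] with ω hω
        rw [hω]
        by_cases hωs : ω ∈ s
        · rw [Set.indicator_of_mem hωs]; exact hgmem n ω
        · rw [Set.indicator_of_notMem hωs]; exact (J ω).zero_mem
      have hψmem : ψf ∈ rangeSubmodule μ J := by
        show ∀ᵐ ω ∂μ, (ψf : Ω → H) ω ∈ J ω
        filter_upwards [hψc] with ω hω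
        rw [hω]
        by_cases hωs : ω ∈ s
        · rw [Set.indicator_of_mem hωs]; exact hgmem m ω
        · rw [Set.indicator_of_notMem hωs]; exact (J ω).zero_mem
      set Φ : rangeSubmodule μ J := ⟨φf, hφmem⟩ with hΦ
      set Ψ : rangeSubmodule μ J := ⟨ψf, hψmem⟩ with hΨ
      have e1 : (fun ω => (inner ℂ ((U Φ : Lp H 2 μ) ω) ((Ψ : Lp H 2 μ) ω) : ℂ))
          =ᵐ[μ] s.indicator (fun ω => (inner ℂ (h n ω) (g m ω) : ℂ)) := by
        filter_upwards [hUR Φ, hφc, hψc] with ω h1 h2 h3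
        have hΦc : ((Φ : Lp H 2 μ) : Ω → H) ω = (φf : Ω → H) ω := rfl
        have hΨc : ((Ψ : Lp H 2 μ) : Ω → H) ω = (ψf : Ω → H) ω := rfl
        simp only [h1, hΦc, hΨc, h2, h3]
        by_cases hωs : ω ∈ s
        · rw [Set.indicator_of_mem hωs, Set.indicator_of_mem hωs,
            Set.indicator_of_mem hωs]
        · rw [Set.indicator_of_notMem hωs, Set.indicator_of_notMem hωs,
            Set.indicator_of_notMem hωs, map_zero, inner_zero_left]
      have e2 : (fun ω => (inner ℂ ((Φ : Lp H 2 μ) ω) ((U Ψ : Lp H 2 μ) ω) : ℂ))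
          =ᵐ[μ] s.indicator (fun ω => (inner ℂ (g n ω) (h m ω) : ℂ)) := by
        filter_upwards [hUR Ψ, hφc, hψc] with ω h1 h2 h3
        have hΦc : ((Φ : Lp H 2 μ) : Ω → H) ω = (φf : Ω → H) ω := rfl
        have hΨc : ((Ψ : Lp H 2 μ) : Ω → H) ω = (ψf : Ω → H) ω := rfl
        simp only [h1, hΦc, hΨc, h2, h3]
        by_cases hωs : ω ∈ s
        · rw [Set.indicator_of_mem hωs, Set.indicator_of_mem hωs,
            Set.indicator_of_mem hωs]
        · rw [Set.indicator_of_notMem hωs, Set.indicator_of_notMem hωs,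
            Set.indicator_of_notMem hωs, map_zero, inner_zero_right]
      have i1 :
          Integrable (s.indicator (fun ω => (inner ℂ (h n ω) (g m ω) : ℂ))) μ :=
        (L2.integrable_inner (𝕜 := ℂ) ((U Φ : Lp H 2 μ)) ((Ψ : Lp H 2 μ))).congr e1
      have i2 :
          Integrable (s.indicator (fun ω => (inner ℂ (g n ω) (h m ω) : ℂ))) μ :=
        (L2.integrable_inner (𝕜 := ℂ) ((Φ : Lp H 2 μ)) ((U Ψ : Lp H 2 μ))).congr e2
      have j1 : IntegrableOn (fun ω => (inner ℂ (h n ω) (g m ω) : ℂ)) s μ :=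
        (integrable_indicator_iff hs).1 i1
      have j2 : IntegrableOn (fun ω => (inner ℂ (g n ω) (h m ω) : ℂ)) s μ :=
        (integrable_indicator_iff hs).1 i2
      refine ⟨j1.sub j2, ?_⟩
      have int1 : (inner ℂ ((U Φ : Lp H 2 μ)) ((Ψ : Lp H 2 μ)) : ℂ)
          = ∫ ω in s, (inner ℂ (h n ω) (g m ω) : ℂ) ∂μ := by
        rw [L2.inner_def, integral_congr_ae e1, integral_indicator hs]
      have int2 : (inner ℂ ((Φ : Lp H 2 μ)) ((U Ψ : Lp H 2 μ)) : ℂ)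
          = ∫ ω in s, (inner ℂ (g n ω) (h m ω) : ℂ) ∂μ := by
        rw [L2.inner_def, integral_congr_ae e2, integral_indicator hs]
      rw [integral_sub j1 j2, ← int1, ← int2, hsa Φ Ψ, sub_self]
    have hFzero : ∀ n m : ℕ,
        (fun ω => (inner ℂ (h n ω) (g m ω) : ℂ) - inner ℂ (g n ω) (h m ω)) =ᵐ[μ] 0 := by
      intro n m
      exact ae_eq_zero_of_forall_setIntegral_eq_of_sigmaFinite
        (fun s hs hμs => (key n m s hs hμs).1)
        (fun s hs hμs => (key n m s hs hμs).2)
    have hae : ∀ᵐ ω ∂μ, ∀ n m : ℕ,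
        (inner ℂ (h n ω) (g m ω) : ℂ) = inner ℂ (g n ω) (h m ω) := by
      rw [MeasureTheory.ae_all_iff]
      intro n
      rw [MeasureTheory.ae_all_iff]
      intro m
      filter_upwards [hFzero n m] with ω hω
      exact sub_eq_zero.1 hω
    filter_upwards [hae] with ω hω a ha b hb
    have hcl : ∀ x ∈ J ω, x ∈ closure (projCLM (J ω) '' Set.range u) := by
      intro x hx
      have hx' : x = projCLM (J ω) x := (projCLM_of_mem (hJclosed ω) hx).symm
      rw [hx']
      refine image_closure_subset_closure_image (projCLM (J ω)).continuous ?_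
      exact ⟨x, by rw [hud.closure_range]; trivial, rfl⟩
    have step1 : ∀ m : ℕ, ∀ x ∈ J ω,
        (inner ℂ (R ω x) (g m ω) : ℂ) = inner ℂ x (R ω (g m ω)) := by
      intro m x hx
      have hcont : Continuous
          (fun y => (inner ℂ (R ω y) (g m ω) : ℂ) - inner ℂ y (R ω (g m ω))) :=
        (((R ω).continuous).inner continuous_const).sub
          (continuous_id.inner continuous_const)
      have hzero : Set.EqOn
          (fun y => (inner ℂ (R ω y) (g m ω) : ℂ) - inner ℂ y (R ω (g m ω))) 0
          (projCLM (J ω) '' Set.range u) := by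
        rintro y ⟨z, ⟨n, rfl⟩, rfl⟩
        show (inner ℂ (h n ω) (g m ω) : ℂ) - inner ℂ (g n ω) (R ω (g m ω)) = 0
        rw [sub_eq_zero]
        exact hω n m
      have := hzero.closure hcont continuous_const (hcl x hx)
      have hx0 : (inner ℂ (R ω x) (g m ω) : ℂ) - inner ℂ x (R ω (g m ω)) = 0 := this
      exact sub_eq_zero.1 hx0
    have hcont2 : Continuous
        (fun y => (inner ℂ (R ω a) y : ℂ) - inner ℂ a (R ω y)) :=
      (continuous_const.inner continuous_id).sub
        (continuous_const.inner ((R ω).continuous))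
    have hzero2 : Set.EqOn
        (fun y => (inner ℂ (R ω a) y : ℂ) - inner ℂ a (R ω y)) 0
        (projCLM (J ω) '' Set.range u) := by
      rintro y ⟨z, ⟨m, rfl⟩, rfl⟩
      show (inner ℂ (R ω a) (g m ω) : ℂ) - inner ℂ a (R ω (g m ω)) = 0
      rw [sub_eq_zero]
      exact step1 m a ha
    have hb0 : (inner ℂ (R ω a) b : ℂ) - inner ℂ a (R ω b) = 0 :=
      hzero2.closure hcont2 continuous_const (hcl b hb)
    exact sub_eq_zero.1 hb0
  · intro hae φ ψ
    have hφ : ∀ᵐ ω ∂μ, ((φ : Lp H 2 μ) : Ω → H) ω ∈ J ω := φ.2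
    have hψ : ∀ᵐ ω ∂μ, ((ψ : Lp H 2 μ) : Ω → H) ω ∈ J ω := ψ.2
    rw [L2.inner_def, L2.inner_def]
    refine integral_congr_ae ?_
    filter_upwards [hUR φ, hUR ψ, hφ, hψ, hae] with ω h1 h2 h3 h4 h5
    rw [h1, h2]
    exact h5 _ h3 _ h4
end
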